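/- arXiv:2605.07500 — 6 statements merged into one kernel-verified Lean document; each statement's English description precedes it below -/
import Mathlib

section
/- Let X be a Banach space, x̄ ∈ X, F : X → X a continuously differentiable map, and A : X → X an injective continuous linear map. Fix R ∈ [0, ∞], and let Y, Z ≥ 0 be constants satisfying ‖A F(x̄)‖ ≤ Y and sup_{x ∈ B(x̄,R)} ‖I − A ∘ DF(x)‖ ≤ Z (operator norm), where B(x̄,R) is the closed ball of radius R centered at x̄ (the whole space if R = ∞). If Z < 1, then for any r ≥ 0 with Y/(1−Z) ≤ r ≤ R, the map T(x) = x − A F(x) is a contraction mapping the closed ball B(x̄, r) into itself, and there exists a unique x⋆ ∈ B(x̄, r) with F(x⋆) = 0. -/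
open scoped ENNReal NNReal

/-- **Radii Polynomial Theorem.** Let `X` be a Banach space, `x̄ ∈ X`, `F : X → X` a
continuously differentiable map, and `A : X → X` an injective continuous linear map.
Fix `R ∈ [0, ∞]`, and let `Y, Z ≥ 0` satisfy `‖A F(x̄)‖ ≤ Y` and
`sup_{x ∈ B(x̄,R)} ‖I − A ∘ DF(x)‖ ≤ Z`.  If `Z < 1`, then for any `r ≥ 0` with
`Y/(1−Z) ≤ r ≤ R`, the map `T(x) = x − A F(x)` maps the closed ball `B(x̄, r)` into
itself, is a contraction (Lipschitz constant `Z < 1`) there, and there is a unique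
`xs ∈ B(x̄, r)` with `F(xs) = 0`. -/
theorem radii_polynomial_theorem
    {X : Type*} [NormedAddCommGroup X] [NormedSpace ℝ X] [CompleteSpace X]
    (F : X → X) (DF : X → X →L[ℝ] X)
    (hFderiv : ∀ x, HasFDerivAt F (DF x) x) (hDFcont : Continuous DF)
    (A : X →L[ℝ] X) (hAinj : Function.Injective A)
    (xb : X) (R : ℝ≥0∞) (Y Z : ℝ) (hY0 : 0 ≤ Y) (hZ0 : 0 ≤ Z)
    (hY : ‖A (F xb)‖ ≤ Y)
    (hZ : ∀ x : X, edist x xb ≤ R → ‖ContinuousLinearMap.id ℝ X - A.comp (DF x)‖ ≤ Z)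
    (hZlt : Z < 1)
    (r : ℝ) (hr0 : 0 ≤ r) (hrY : Y / (1 - Z) ≤ r) (hrR : ENNReal.ofReal r ≤ R) :
    (∀ x ∈ Metric.closedBall xb r, x - A (F x) ∈ Metric.closedBall xb r) ∧
    (∀ x ∈ Metric.closedBall xb r, ∀ y ∈ Metric.closedBall xb r,
      ‖(x - A (F x)) - (y - A (F y))‖ ≤ Z * ‖x - y‖) ∧
    (∃! xs, xs ∈ Metric.closedBall xb r ∧ F xs = 0) := by
  set T : X → X := fun x => x - A (F x) with hT
  set s : Set X := Metric.closedBall xb r with hs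
  have h1Z : 0 < 1 - Z := by linarith
  -- edist of ball members is ≤ R
  have hmemR : ∀ x ∈ s, edist x xb ≤ R := by
    intro x hx
    refine le_trans ?_ hrR
    rw [edist_dist]
    exact ENNReal.ofReal_le_ofReal (Metric.mem_closedBall.mp hx)
  have hTderiv : ∀ x : X, HasFDerivAt T
      (ContinuousLinearMap.id ℝ X - A.comp (DF x)) x := by
    intro x
    exact (hasFDerivAt_id x).sub (A.hasFDerivAt.comp x (hFderiv x))
  -- Lipschitz estimate on the ball
  have hlip : ∀ x ∈ s, ∀ y ∈ s, ‖T x - T y‖ ≤ Z * ‖x - y‖ := by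
    intro x hx y hy
    exact (convex_closedBall xb r).norm_image_sub_le_of_norm_hasFDerivWithin_le
      (fun z hz => (hTderiv z).hasFDerivWithinAt)
      (fun z hz => hZ z (hmemR z hz)) hy hx
  -- maps ball to itself
  have hmaps : ∀ x ∈ s, T x ∈ s := by
    intro x hx
    have hxb : xb ∈ s := Metric.mem_closedBall_self hr0
    have h1 : ‖T x - T xb‖ ≤ Z * ‖x - xb‖ := hlip x hx xb hxb
    have h2 : ‖T xb - xb‖ ≤ Y := by
      have : T xb - xb = -(A (F xb)) := by simp [hT]
      rw [this, norm_neg]; exact hY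
    have hxd : ‖x - xb‖ ≤ r := by
      rw [← dist_eq_norm]; exact Metric.mem_closedBall.mp hx
    have hYr : Y ≤ (1 - Z) * r := by
      have := (div_le_iff₀ h1Z).mp hrY
      linarith
    have : ‖T x - xb‖ ≤ r := by
      calc ‖T x - xb‖ ≤ ‖T x - T xb‖ + ‖T xb - xb‖ := norm_sub_le_norm_sub_add_norm_sub _ _ _
        _ ≤ Z * r + Y := by
            have := mul_le_mul_of_nonneg_left hxd hZ0
            linarith
        _ ≤ r := by nlinarith
    rwa [Metric.mem_closedBall, dist_eq_norm]
  refine ⟨hmaps, hlip, ?_⟩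
  -- Fixed point via Banach contraction on the subtype
  have hsc : IsClosed s := Metric.isClosed_closedBall
  haveI : CompleteSpace s := hsc.completeSpace_coe
  haveI : Nonempty s := ⟨⟨xb, Metric.mem_closedBall_self hr0⟩⟩
  set T' : s → s := fun x => ⟨T x.1, hmaps x.1 x.2⟩ with hT'
  have hKlt : (⟨Z, hZ0⟩ : ℝ≥0) < 1 := by
    exact hZlt
  have hcontr : ContractingWith ⟨Z, hZ0⟩ T' := by
    refine ⟨hKlt, LipschitzWith.of_dist_le_mul fun x y => ?_⟩
    simp only [hT', Subtype.dist_eq, dist_eq_norm]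
    exact hlip x.1 x.2 y.1 y.2
  set xs : s := ContractingWith.fixedPoint T' hcontr with hxsdef
  have hxs : T' xs = xs := hcontr.fixedPoint_isFixedPt
  -- translate fixed point to F = 0
  have hfix_iff : ∀ x : X, T x = x ↔ F x = 0 := by
    intro x
    constructor
    · intro h
      have : A (F x) = 0 := by
        have := sub_eq_self.mp h
        simpa using this
      have := hAinj (a₁ := F x) (a₂ := 0) (by simpa using this)
      exact this
    · intro h; simp [hT, h]
  refine ⟨xs.1, ⟨xs.2, (hfix_iff xs.1).mp ?_⟩, ?_⟩
  · have : T' xs = xs := hxs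
    exact congrArg Subtype.val this
  · rintro y ⟨hy, hFy⟩
    have hTy : T y = y := (hfix_iff y).mpr hFy
    have hTx : T xs.1 = xs.1 := congrArg Subtype.val hxs
    have h := hlip y hy xs.1 xs.2
    rw [hTy, hTx] at h
    by_contra hne
    have hpos : 0 < ‖y - xs.1‖ := by
      rw [norm_pos_iff, sub_ne_zero]; exact fun h' => hne (by simp [h'])
    nlinarith
end

section
/- Let μ ≥ 1 and let u, w : ℕ → ℝ be sequences such that ‖u‖ = |u₀| + 2∑_{k≥1} |u_k| μ^k and ‖w‖ = |w₀| + 2∑_{k≥1} |w_k| μ^k are finite. Define the discrete convolution (u ∗ w)_k = ∑_{l ∈ ℤ} u_{|k−l|} w_{|l|} for k ∈ ℕ. Then ‖u ∗ w‖ ≤ ‖u‖ · ‖w‖, where ‖u ∗ w‖ = |(u∗w)₀| + 2∑_{k≥1} |(u∗w)_k| μ^k; that is, the Chebyshev coefficient space X_{C,μ} is a Banach algebra under discrete convolution. -/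
set_option maxHeartbeats 1000000

/-- Banach-algebra estimate for the discrete convolution of Chebyshev coefficient
sequences: for `μ ≥ 1` and sequences `u, w` with finite weighted norm
`‖u‖ = |u₀| + 2∑_{k≥1} |u_k| μ^k`, the convolution `(u ∗ w)_k = ∑_{l ∈ ℤ} u_{|k−l|} w_{|l|}`
satisfies `‖u ∗ w‖ ≤ ‖u‖ ‖w‖`. -/
theorem chebyshev_convolution_banach_algebra
    (μ : ℝ) (hμ : 1 ≤ μ) (u w : ℕ → ℝ)
    (hu : Summable fun k : ℕ => |u k| * μ ^ k)
    (hw : Summable fun k : ℕ => |w k| * μ ^ k) :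
    (|∑' l : ℤ, u ((0 - l).natAbs) * w l.natAbs|
        + 2 * ∑' k : ℕ, |∑' l : ℤ, u (((k : ℤ) + 1 - l).natAbs) * w l.natAbs| * μ ^ (k + 1)) ≤
      (|u 0| + 2 * ∑' k : ℕ, |u (k + 1)| * μ ^ (k + 1)) *
      (|w 0| + 2 * ∑' k : ℕ, |w (k + 1)| * μ ^ (k + 1)) := by
  have hμ0 : (0:ℝ) < μ := lt_of_lt_of_le one_pos hμ
  set F : ℤ → ℝ := fun m => |u m.natAbs| * μ ^ m.natAbs with hF_def
  set G : ℤ → ℝ := fun m => |w m.natAbs| * μ ^ m.natAbs with hG_def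
  have hFnat : (fun n : ℕ => F n) = fun k => |u k| * μ ^ k := by
    funext n; simp [hF_def]
  have hFneg : (fun n : ℕ => F (-((n:ℤ)+1))) = fun k => |u (k+1)| * μ ^ (k+1) := by
    funext n
    have h : (-((n:ℤ)+1)).natAbs = n+1 := by omega
    show |u (-((n:ℤ)+1)).natAbs| * μ ^ (-((n:ℤ)+1)).natAbs = _
    rw [h]
  have hGnat : (fun n : ℕ => G n) = fun k => |w k| * μ ^ k := by
    funext n; simp [hG_def]
  have hGneg : (fun n : ℕ => G (-((n:ℤ)+1))) = fun k => |w (k+1)| * μ ^ (k+1) := by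
    funext n
    have h : (-((n:ℤ)+1)).natAbs = n+1 := by omega
    show |w (-((n:ℤ)+1)).natAbs| * μ ^ (-((n:ℤ)+1)).natAbs = _
    rw [h]
  have huS : Summable fun k : ℕ => |u (k+1)| * μ ^ (k+1) :=
    (summable_nat_add_iff 1).2 hu
  have hwS : Summable fun k : ℕ => |w (k+1)| * μ ^ (k+1) :=
    (summable_nat_add_iff 1).2 hw
  have hF : Summable F :=
    Summable.of_nat_of_neg_add_one (hFnat ▸ hu) (hFneg ▸ huS)
  have hG : Summable G :=
    Summable.of_nat_of_neg_add_one (hGnat ▸ hw) (hGneg ▸ hwS)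
  have hFval : ∑' m : ℤ, F m = |u 0| + 2 * ∑' k : ℕ, |u (k+1)| * μ ^ (k+1) := by
    rw [tsum_of_nat_of_neg_add_one (hFnat ▸ hu) (hFneg ▸ huS), hFnat, hFneg,
      Summable.tsum_eq_zero_add hu]
    simp; ring
  have hGval : ∑' m : ℤ, G m = |w 0| + 2 * ∑' k : ℕ, |w (k+1)| * μ ^ (k+1) := by
    rw [tsum_of_nat_of_neg_add_one (hGnat ▸ hw) (hGneg ▸ hwS), hGnat, hGneg,
      Summable.tsum_eq_zero_add hw]
    simp; ring
  -- product summability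
  have hFG : Summable fun p : ℤ × ℤ => F p.1 * G p.2 := hF.mul_of_nonneg hG
    (fun m => mul_nonneg (abs_nonneg _) (le_of_lt (pow_pos hμ0 _)))
    (fun m => mul_nonneg (abs_nonneg _) (le_of_lt (pow_pos hμ0 _)))
  have hshift_inj : Function.Injective (fun p : ℤ × ℤ => ((p.1 - p.2, p.2) : ℤ × ℤ)) := by
    intro a b h
    have h1 := congrArg Prod.fst h
    have h2 := congrArg Prod.snd h
    simp only at h1 h2
    exact Prod.ext (by omega) h2
  have hFGe : Summable fun p : ℤ × ℤ => F (p.1 - p.2) * G p.2 := by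
    have heq : (fun p : ℤ × ℤ => F (p.1 - p.2) * G p.2)
        = (fun p : ℤ × ℤ => F p.1 * G p.2) ∘ (fun p : ℤ × ℤ => (p.1 - p.2, p.2)) := rfl
    rw [heq]
    exact hFG.comp_injective hshift_inj
  have hFGnn : ∀ p : ℤ × ℤ, 0 ≤ F (p.1 - p.2) * G p.2 := fun p =>
    mul_nonneg (mul_nonneg (abs_nonneg _) (le_of_lt (pow_pos hμ0 _)))
      (mul_nonneg (abs_nonneg _) (le_of_lt (pow_pos hμ0 _)))
  have hsec : ∀ m : ℤ, Summable fun l : ℤ => F (m - l) * G l := fun m =>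
    hFGe.prod_factor m
  set D : ℤ → ℝ := fun m => ∑' l : ℤ, F (m - l) * G l with hD_def
  have hD : Summable D := by
    have := (summable_prod_of_nonneg hFGnn).1 hFGe
    exact this.2
  have hDval : ∑' m : ℤ, D m = (∑' m : ℤ, F m) * (∑' m : ℤ, G m) := by
    rw [Summable.tsum_mul_tsum hF hG hFG]
    have heq : ∑' p : ℤ × ℤ, F (p.1 - p.2) * G p.2 = ∑' z : ℤ × ℤ, F z.1 * G z.2 :=
      Equiv.tsum_eq (⟨fun p => (p.1 - p.2, p.2), fun p => (p.1 + p.2, p.2),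
        fun p => by simp, fun p => by simp⟩ : ℤ × ℤ ≃ ℤ × ℤ)
        (fun z : ℤ × ℤ => F z.1 * G z.2)
    rw [← heq, Summable.tsum_prod' hFGe (fun m => hsec m)]
  -- the convolution terms
  set C : ℤ → ℝ := fun m =>
    |∑' l : ℤ, u ((m - l).natAbs) * w l.natAbs| * μ ^ m.natAbs with hC_def
  have hterm : ∀ m l : ℤ,
      |u ((m - l).natAbs) * w l.natAbs| * μ ^ m.natAbs ≤ F (m - l) * G l := by
    intro m l
    have h1 : m.natAbs ≤ (m - l).natAbs + l.natAbs := by omega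
    have h2 : μ ^ m.natAbs ≤ μ ^ ((m - l).natAbs + l.natAbs) :=
      pow_le_pow_right₀ hμ h1
    calc |u ((m - l).natAbs) * w l.natAbs| * μ ^ m.natAbs
        ≤ |u ((m - l).natAbs)| * |w l.natAbs| * μ ^ ((m - l).natAbs + l.natAbs) := by
          rw [abs_mul]
          exact mul_le_mul_of_nonneg_left h2
            (mul_nonneg (abs_nonneg _) (abs_nonneg _))
      _ = F (m - l) * G l := by rw [pow_add]; ring
  have hconv_sum : ∀ m : ℤ, Summable fun l : ℤ => |u ((m - l).natAbs) * w l.natAbs| := by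
    intro m
    apply (hsec m).of_nonneg_of_le (fun l => abs_nonneg _)
    intro l
    calc |u ((m - l).natAbs) * w l.natAbs|
        ≤ |u ((m - l).natAbs) * w l.natAbs| * μ ^ m.natAbs := by
          nlinarith [abs_nonneg (u ((m - l).natAbs) * w l.natAbs),
            one_le_pow₀ hμ (n := m.natAbs)]
      _ ≤ F (m - l) * G l := hterm m l
  have hCD : ∀ m : ℤ, C m ≤ D m := by
    intro m
    have h0 := norm_tsum_le_tsum_norm (f := fun l : ℤ => u ((m - l).natAbs) * w l.natAbs)
      (by simpa only [Real.norm_eq_abs] using hconv_sum m)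
    have h1 : |∑' l : ℤ, u ((m - l).natAbs) * w l.natAbs|
        ≤ ∑' l : ℤ, |u ((m - l).natAbs) * w l.natAbs| := by
      simpa only [Real.norm_eq_abs] using h0
    calc C m ≤ (∑' l : ℤ, |u ((m - l).natAbs) * w l.natAbs|) * μ ^ m.natAbs :=
          mul_le_mul_of_nonneg_right h1 (le_of_lt (pow_pos hμ0 _))
      _ = ∑' l : ℤ, |u ((m - l).natAbs) * w l.natAbs| * μ ^ m.natAbs := by
          rw [tsum_mul_right]
      _ ≤ D m := Summable.tsum_le_tsum (hterm m)
          ((hconv_sum m).mul_right (μ ^ m.natAbs)) (hsec m)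
  have hCnn : ∀ m : ℤ, 0 ≤ C m := fun m =>
    mul_nonneg (abs_nonneg _) (le_of_lt (pow_pos hμ0 _))
  have hC : Summable C := hD.of_nonneg_of_le hCnn hCD
  -- symmetry of C
  have hCsymm : ∀ k : ℤ, C (-k) = C k := by
    intro k
    simp only [hC_def, Int.natAbs_neg]
    congr 1
    rw [← (Equiv.neg ℤ).tsum_eq (fun l : ℤ => u ((-k - l).natAbs) * w l.natAbs)]
    congr 1
    apply tsum_congr
    intro l
    simp only [Equiv.neg_apply, Int.natAbs_neg]
    congr 2
    omega
  -- splitting the tsum of C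
  have hCnatS : Summable fun n : ℕ => C n := hC.comp_injective Nat.cast_injective
  have hCnegS : Summable fun n : ℕ => C (-((n:ℤ)+1)) := by
    have hinj : Function.Injective (fun n : ℕ => (-((n:ℤ)+1) : ℤ)) := by
      intro a b h
      simp only at h
      omega
    exact hC.comp_injective hinj
  have hCsplit : ∑' m : ℤ, C m = C 0 + 2 * ∑' n : ℕ, C ((n:ℤ)+1) := by
    rw [tsum_of_nat_of_neg_add_one hCnatS hCnegS, Summable.tsum_eq_zero_add hCnatS]
    have h2 : (∑' n : ℕ, C (-((n:ℤ)+1))) = ∑' n : ℕ, C ((n:ℤ)+1) :=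
      tsum_congr (fun n => hCsymm ((n:ℤ)+1))
    have h3 : (∑' n : ℕ, C ((n+1 : ℕ))) = ∑' n : ℕ, C ((n:ℤ)+1) := by
      apply tsum_congr; intro n
      have h : ((n+1 : ℕ) : ℤ) = (n:ℤ)+1 := by push_cast; ring
      rw [h]
    rw [h2, h3]
    simp only [Nat.cast_zero]
    ring
  have hLHS : (|∑' l : ℤ, u ((0 - l).natAbs) * w l.natAbs|
        + 2 * ∑' k : ℕ, |∑' l : ℤ, u (((k : ℤ) + 1 - l).natAbs) * w l.natAbs| * μ ^ (k + 1))
      = ∑' m : ℤ, C m := by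
    have hA : |∑' l : ℤ, u ((0 - l).natAbs) * w l.natAbs| = C 0 := by
      simp [hC_def]
    have hB : ∀ k : ℕ, |∑' l : ℤ, u (((k : ℤ) + 1 - l).natAbs) * w l.natAbs| * μ ^ (k + 1)
        = C ((k:ℤ)+1) := by
      intro k
      have h1 : (((k:ℤ)+1)).natAbs = k+1 := by omega
      simp only [hC_def, h1]
    rw [hCsplit, hA, tsum_congr hB]
  rw [hLHS, ← hFval, ← hGval, ← hDval]
  exact Summable.tsum_le_tsum hCD hC hD
end

section
/- Let ν > 1, r ≥ 0, and let h : ℕ × ℕ → ℂ satisfy ∑_{(k₁,k₂)} |h_{(k₁,k₂)}| ν^{k₁+k₂} ≤ r. Then for all θ₁, θ₂ ∈ ℂ with 0 < |θ₁| < 1 and |θ₂| < 1, the partial-derivative series satisfies |∑_{k₁≥1, k₂≥0} k₁ h_{(k₁,k₂)} θ₁^{k₁−1} θ₂^{k₂}| ≤ r / (e · |θ₁| · ln(ν/|θ₁|)), where e is Euler's number. -/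
lemma aux_mexp (L : ℝ) (hL : 0 < L) (m : ℕ) :
    (m : ℝ) * Real.exp (-((m : ℝ) * L)) ≤ 1 / (Real.exp 1 * L) := by
  have hx : (m : ℝ) * L * Real.exp 1 ≤ Real.exp ((m : ℝ) * L) := by
    have h1 := Real.add_one_le_exp ((m : ℝ) * L - 1)
    have h2 : Real.exp ((m : ℝ) * L - 1) * Real.exp 1 = Real.exp ((m : ℝ) * L) := by
      rw [← Real.exp_add]; ring_nf
    calc (m : ℝ) * L * Real.exp 1 ≤ Real.exp ((m : ℝ) * L - 1) * Real.exp 1 := by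
          have := Real.exp_pos (1 : ℝ)
          nlinarith
      _ = Real.exp ((m : ℝ) * L) := h2
  rw [Real.exp_neg, mul_comm, ← div_eq_inv_mul,
    div_le_div_iff₀ (Real.exp_pos _) (by positivity)]
  nlinarith [Real.exp_pos ((m : ℝ) * L)]

lemma aux_kt (t L : ℝ) (ht : 0 < t) (hL : L = Real.log (1 / t)) (hLpos : 0 < L) (m : ℕ) :
    (m : ℝ) * t ^ m ≤ 1 / (Real.exp 1 * L) := by
  have hlt : Real.log t = -L := by
    rw [hL, Real.log_div one_ne_zero (ne_of_gt ht), Real.log_one]; ring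
  have htexp : t = Real.exp (-L) := by rw [← hlt, Real.exp_log ht]
  have : t ^ m = Real.exp (-((m : ℝ) * L)) := by
    rw [htexp, ← Real.exp_nat_mul]; ring_nf
  rw [this]
  exact aux_mexp L hLpos m

set_option maxHeartbeats 1000000 in
/-- Rigorous evaluation of the partial derivative of a bivariate power series:
if `ν > 1` and `∑ |h_k| ν^{k₁+k₂} ≤ r`, then for `0 < |θ₁| < 1` and `|θ₂| < 1`,
`|∑_{k₁≥1,k₂≥0} k₁ h_{(k₁,k₂)} θ₁^{k₁−1} θ₂^{k₂}| ≤ r / (e |θ₁| ln(ν/|θ₁|))`. -/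
theorem rigorous_evaluation_derivative
    (ν : ℝ) (hν : 1 < ν) (r : ℝ) (hr : 0 ≤ r) (h : ℕ × ℕ → ℂ)
    (hsum : Summable fun k : ℕ × ℕ => ‖h k‖ * ν ^ (k.1 + k.2))
    (hbound : (∑' k : ℕ × ℕ, ‖h k‖ * ν ^ (k.1 + k.2)) ≤ r)
    (θ₁ θ₂ : ℂ) (h1pos : 0 < ‖θ₁‖) (h1 : ‖θ₁‖ < 1)
    (h2 : ‖θ₂‖ < 1) :
    ‖∑' k : ℕ × ℕ, ((k.1 : ℂ) + 1) * h (k.1 + 1, k.2) * θ₁ ^ k.1 * θ₂ ^ k.2‖ ≤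
      r / (Real.exp 1 * ‖θ₁‖ * Real.log (ν / ‖θ₁‖)) := by
  set a := ‖θ₁‖ with ha
  set b := ‖θ₂‖ with hb
  have hνpos : (0 : ℝ) < ν := lt_trans one_pos hν
  have haν : a < ν := lt_trans h1 hν
  set L := Real.log (ν / a) with hLdef
  have hLpos : 0 < L := Real.log_pos ((one_lt_div h1pos).mpr haν)
  set C := 1 / (Real.exp 1 * a * L) with hC
  have hCpos : 0 < C := by positivity
  -- key pointwise bound
  have key : ∀ k : ℕ × ℕ,
      ‖((k.1 : ℂ) + 1) * h (k.1 + 1, k.2) * θ₁ ^ k.1 * θ₂ ^ k.2‖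
        ≤ C * (‖h (k.1 + 1, k.2)‖ * ν ^ (k.1 + 1 + k.2)) := by
    intro k
    have habs : ‖((k.1 : ℂ) + 1) * h (k.1 + 1, k.2) * θ₁ ^ k.1 * θ₂ ^ k.2‖
        = ((k.1 : ℝ) + 1) * ‖h (k.1 + 1, k.2)‖ * a ^ k.1 * b ^ k.2 := by
      rw [norm_mul, norm_mul, norm_mul, norm_pow, norm_pow]
      congr 1; congr 2
      have : ((k.1 : ℂ) + 1) = ((k.1 + 1 : ℕ) : ℂ) := by push_cast; ring
      rw [this, Complex.norm_natCast]; push_cast; ring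
    rw [habs]
    have hb0 : 0 ≤ b := norm_nonneg _
    have hbpow : b ^ k.2 ≤ 1 := pow_le_one₀ hb0 (le_of_lt h2)
    have hνpow : (1 : ℝ) ≤ ν ^ k.2 := one_le_pow₀ (le_of_lt hν)
    have hkey : ((k.1 : ℝ) + 1) * a ^ k.1 ≤ C * ν ^ (k.1 + 1) := by
      have ht : (0 : ℝ) < a / ν := by positivity
      have hLeq : L = Real.log (1 / (a / ν)) := by
        rw [hLdef, one_div_div]
      have := aux_kt (a / ν) L ht hLeq hLpos (k.1 + 1)
      have hexp : ((k.1 + 1 : ℕ) : ℝ) * (a / ν) ^ (k.1 + 1) ≤ 1 / (Real.exp 1 * L) := this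
      have hνp : (0 : ℝ) < ν ^ (k.1 + 1) := by positivity
      rw [div_pow, ← mul_div_assoc] at hexp
      push_cast at hexp
      rw [div_le_div_iff₀ hνp (by positivity)] at hexp
      rw [hC, div_mul_eq_mul_div, le_div_iff₀ (by positivity)]
      have e1 : ((k.1 : ℝ) + 1) * a ^ k.1 * (Real.exp 1 * a * L)
          = ((k.1 : ℝ) + 1) * a ^ (k.1 + 1) * (Real.exp 1 * L) := by rw [pow_succ]; ring
      rw [e1, one_mul]
      linarith [hexp]
    calc ((k.1 : ℝ) + 1) * ‖h (k.1 + 1, k.2)‖ * a ^ k.1 * b ^ k.2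
        ≤ ((k.1 : ℝ) + 1) * ‖h (k.1 + 1, k.2)‖ * a ^ k.1 * 1 := by
          have : 0 ≤ ((k.1 : ℝ) + 1) * ‖h (k.1 + 1, k.2)‖ * a ^ k.1 := by positivity
          nlinarith
      _ = ‖h (k.1 + 1, k.2)‖ * (((k.1 : ℝ) + 1) * a ^ k.1) := by ring
      _ ≤ ‖h (k.1 + 1, k.2)‖ * (C * ν ^ (k.1 + 1)) := by
          exact mul_le_mul_of_nonneg_left hkey (norm_nonneg _)
      _ ≤ ‖h (k.1 + 1, k.2)‖ * (C * ν ^ (k.1 + 1)) * ν ^ k.2 := by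
          have hX : 0 ≤ ‖h (k.1 + 1, k.2)‖ * (C * ν ^ (k.1 + 1)) := by positivity
          nlinarith [hνpow, hX]
      _ = C * (‖h (k.1 + 1, k.2)‖ * ν ^ (k.1 + 1 + k.2)) := by
          rw [pow_add]; ring
  -- summability of g
  have hinj : Function.Injective (fun k : ℕ × ℕ => (k.1 + 1, k.2)) := by
    intro x y hxy
    simp only [Prod.mk.injEq] at hxy
    exact Prod.ext (by omega) hxy.2
  have hg : Summable (fun k : ℕ × ℕ => ‖h (k.1 + 1, k.2)‖ * ν ^ (k.1 + 1 + k.2)) :=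
    hsum.comp_injective hinj
  have hterm : Summable (fun k : ℕ × ℕ =>
      ‖((k.1 : ℂ) + 1) * h (k.1 + 1, k.2) * θ₁ ^ k.1 * θ₂ ^ k.2‖) :=
    Summable.of_nonneg_of_le (fun k => norm_nonneg _) key (hg.mul_left C)
  have hgsum : (∑' k : ℕ × ℕ, ‖h (k.1 + 1, k.2)‖ * ν ^ (k.1 + 1 + k.2)) ≤ r := by
    refine le_trans (Summable.tsum_le_tsum_of_inj (fun k : ℕ × ℕ => (k.1 + 1, k.2)) hinj
      (fun c _ => by positivity) (fun k => le_refl _) hg hsum) hbound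
  calc ‖∑' k : ℕ × ℕ, ((k.1 : ℂ) + 1) * h (k.1 + 1, k.2) * θ₁ ^ k.1 * θ₂ ^ k.2‖
      ≤ ∑' k : ℕ × ℕ, ‖((k.1 : ℂ) + 1) * h (k.1 + 1, k.2) * θ₁ ^ k.1 * θ₂ ^ k.2‖ := by
        exact norm_tsum_le_tsum_norm hterm
    _ ≤ ∑' k : ℕ × ℕ, C * (‖h (k.1 + 1, k.2)‖ * ν ^ (k.1 + 1 + k.2)) :=
        Summable.tsum_le_tsum key hterm (hg.mul_left C)
    _ = C * ∑' k : ℕ × ℕ, ‖h (k.1 + 1, k.2)‖ * ν ^ (k.1 + 1 + k.2) := tsum_mul_left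
    _ ≤ C * r := mul_le_mul_of_nonneg_left hgsum (le_of_lt hCpos)
    _ = r / (Real.exp 1 * a * L) := by rw [hC]; ring
end

section
/- Let μ ≥ 1 and let u : ℕ → ℝ satisfy ‖u‖ = |u₀| + 2∑_{k≥1} |u_k| μ^k < ∞. Define the Chebyshev integration operator 𝓛_C by (𝓛_C u)₀ = u₀ − u₁/2 + 2∑_{l≥2} ((−1)^{l+1}/(l² − 1)) u_l and (𝓛_C u)_k = (u_{k−1} − u_{k+1})/(2k) for k ≥ 1. Then ‖𝓛_C u‖ = |(𝓛_C u)₀| + 2∑_{k≥1} |(𝓛_C u)_k| μ^k ≤ (1 + μ) ‖u‖. -/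
/-- The Chebyshev integration operator acting on coefficient sequences:
`(𝓛_C u)₀ = u₀ − u₁/2 + 2∑_{l≥2} ((−1)^{l+1}/(l²−1)) u_l` and
`(𝓛_C u)_k = (u_{k−1} − u_{k+1})/(2k)` for `k ≥ 1`. -/
noncomputable def chebIntOp (u : ℕ → ℝ) : ℕ → ℝ := fun k =>
  match k with
  | 0 => u 0 - u 1 / 2 + 2 * ∑' l : ℕ, ((-1 : ℝ) ^ (l + 2 + 1) / (((l + 2 : ℕ) : ℝ) ^ 2 - 1)) * u (l + 2)
  | k + 1 => (u k - u (k + 2)) / (2 * ((k : ℝ) + 1))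

/-- The weighted ℓ¹ norm of a Chebyshev coefficient sequence:
`‖u‖ = |u₀| + 2∑_{k≥1} |u_k| μ^k`. -/
noncomputable def chebNorm (μ : ℝ) (u : ℕ → ℝ) : ℝ :=
  |u 0| + 2 * ∑' k : ℕ, |u (k + 1)| * μ ^ (k + 1)

set_option maxHeartbeats 1000000 in
/-- Operator norm bound `‖𝓛_C‖ ≤ 1 + μ` on `X_{C,μ}`: for `μ ≥ 1` and any `u` with
finite weighted norm, `‖𝓛_C u‖ ≤ (1 + μ) ‖u‖`. -/
theorem chebIntOp_norm_bound
    (μ : ℝ) (hμ : 1 ≤ μ) (u : ℕ → ℝ)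
    (hu : Summable fun k : ℕ => |u k| * μ ^ k) :
    chebNorm μ (chebIntOp u) ≤ (1 + μ) * chebNorm μ u := by
  have hμ0 : (0:ℝ) ≤ μ := le_trans zero_le_one hμ
  set a : ℕ → ℝ := fun k => |u k| * μ ^ k with ha_def
  have ha : Summable a := hu
  have ha0 : ∀ k, 0 ≤ a k := fun k => mul_nonneg (abs_nonneg _) (pow_nonneg hμ0 _)
  have hpow : ∀ k : ℕ, (1:ℝ) ≤ μ ^ k := fun k => one_le_pow₀ hμ
  have hub : ∀ k, |u k| ≤ a k := fun k => le_mul_of_one_le_right (abs_nonneg _) (hpow k)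
  have h1 : Summable (fun k => a (k+1)) := (summable_nat_add_iff 1).2 ha
  have h2 : Summable (fun k => a (k+2)) := (summable_nat_add_iff 2).2 ha
  set S : ℝ := ∑' k, a (k+1) with hS_def
  set S₂ : ℝ := ∑' k, a (k+2) with hS2_def
  have hS0 : 0 ≤ S := tsum_nonneg (fun k => ha0 _)
  have hS20 : 0 ≤ S₂ := tsum_nonneg (fun k => ha0 _)
  have hSsplit : S = a 1 + S₂ := by
    rw [hS_def, Summable.tsum_eq_zero_add h1]
  -- head term
  set f : ℕ → ℝ := fun l => ((-1 : ℝ) ^ (l + 2 + 1) / (((l + 2 : ℕ) : ℝ) ^ 2 - 1)) * u (l + 2) with hf_def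
  have hfb : ∀ l, |f l| ≤ (1/3) * a (l+2) := by
    intro l
    have hd : (3:ℝ) ≤ ((l + 2 : ℕ) : ℝ) ^ 2 - 1 := by
      have h2l : (2:ℝ) ≤ ((l+2:ℕ):ℝ) := by exact_mod_cast Nat.le_add_left 2 l
      nlinarith
    have hcoef : |((-1 : ℝ) ^ (l + 2 + 1) / (((l + 2 : ℕ) : ℝ) ^ 2 - 1))| ≤ 1/3 := by
      rw [abs_div, abs_pow, abs_neg, abs_one, one_pow,
        abs_of_nonneg (by linarith : (0:ℝ) ≤ (((l + 2 : ℕ) : ℝ) ^ 2 - 1))]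
      rw [div_le_div_iff₀ (by linarith) (by norm_num)]
      linarith
    calc |f l| = |((-1 : ℝ) ^ (l + 2 + 1) / (((l + 2 : ℕ) : ℝ) ^ 2 - 1))| * |u (l+2)| := abs_mul _ _
      _ ≤ (1/3) * a (l+2) := mul_le_mul hcoef (hub _) (abs_nonneg _) (by norm_num)
  have hfabs : Summable (fun l => |f l|) :=
    Summable.of_nonneg_of_le (fun l => abs_nonneg _) hfb (h2.mul_left (1/3))
  have hT : |∑' l, f l| ≤ (1/3) * S₂ := by
    have hfabs' : Summable fun l => ‖f l‖ := by simpa only [Real.norm_eq_abs] using hfabs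
    calc |∑' l, f l| ≤ ∑' l, |f l| := by
          simpa only [Real.norm_eq_abs] using norm_tsum_le_tsum_norm hfabs'
      _ ≤ ∑' l, (1/3) * a (l+2) := Summable.tsum_le_tsum hfb hfabs (h2.mul_left _)
      _ = (1/3) * S₂ := by rw [tsum_mul_left]
  have h0 : |chebIntOp u 0| ≤ a 0 + a 1 / 2 + (2/3) * S₂ := by
    have hrfl : chebIntOp u 0 = u 0 + (-(u 1 / 2)) + 2 * (∑' l, f l) := by
      simp only [chebIntOp, hf_def]; ring
    rw [hrfl]
    have := abs_add_three (u 0) (-(u 1 / 2)) (2 * (∑' l, f l))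
    have e1 : |(-(u 1 / 2))| = |u 1|/2 := by rw [abs_neg, abs_div]; norm_num
    have e2 : |2 * (∑' l, f l)| = 2 * |∑' l, f l| := by rw [abs_mul]; norm_num
    have hu0 : |u 0| = a 0 := by simp [ha_def]
    have hu1 : |u 1| ≤ a 1 := hub 1
    rw [e1, e2] at this
    linarith
  -- tail terms
  have hgb : ∀ k, |chebIntOp u (k+1)| * μ ^ (k+1) ≤ (μ * a k + a (k+2))/2 := by
    intro k
    show |(u k - u (k + 2)) / (2 * ((k : ℝ) + 1))| * μ ^ (k+1) ≤ (μ * a k + a (k+2))/2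
    have hk : (0:ℝ) < 2*((k:ℝ)+1) := by positivity
    have htri : |u k - u (k+2)| ≤ |u k| + |u (k+2)| := by
      rw [sub_eq_add_neg]
      exact (abs_add_le _ _).trans (by rw [abs_neg])
    have e1 : |u k| * μ ^ (k+1) = μ * a k := by
      rw [ha_def]; rw [pow_succ]; ring
    have e2 : |u (k+2)| * μ ^ (k+1) ≤ a (k+2) := by
      rw [ha_def]
      exact mul_le_mul_of_nonneg_left (pow_le_pow_right₀ hμ (Nat.le_succ _)) (abs_nonneg _)
    have h₁ : |u k - u (k+2)| * μ ^ (k+1) ≤ μ * a k + a (k+2) := by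
      calc |u k - u (k+2)| * μ ^ (k+1) ≤ (|u k| + |u (k+2)|) * μ ^ (k+1) :=
            mul_le_mul_of_nonneg_right htri (pow_nonneg hμ0 _)
        _ = |u k| * μ ^ (k+1) + |u (k+2)| * μ ^ (k+1) := add_mul _ _ _
        _ ≤ μ * a k + a (k+2) := add_le_add (le_of_eq e1) e2
    have h₂ : 0 ≤ μ * a k + a (k+2) := by positivity
    have hk1 : (2:ℝ) ≤ 2*((k:ℝ)+1) := by
      have : (0:ℝ) ≤ (k:ℝ) := Nat.cast_nonneg k
      linarith
    rw [abs_div, abs_of_pos hk, div_mul_eq_mul_div, div_le_div_iff₀ hk (by norm_num : (0:ℝ) < 2)]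
    nlinarith [abs_nonneg (u k - u (k+2)), pow_nonneg hμ0 (k+1)]
  have hb : Summable (fun k => (μ * a k + a (k+2))/2) :=
    ((ha.mul_left μ).add h2).div_const 2
  have hg : Summable (fun k => |chebIntOp u (k+1)| * μ ^ (k+1)) :=
    Summable.of_nonneg_of_le (fun k => mul_nonneg (abs_nonneg _) (pow_nonneg hμ0 _)) hgb hb
  have hbsum : ∑' k, (μ * a k + a (k+2))/2 = (μ * a 0 + μ * S + S₂)/2 := by
    rw [tsum_div_const, Summable.tsum_add (ha.mul_left μ) h2, tsum_mul_left, Summable.tsum_eq_zero_add ha]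
    rw [← hS_def, ← hS2_def]
    ring
  have htail : ∑' k, |chebIntOp u (k+1)| * μ ^ (k+1) ≤ (μ * a 0 + μ * S + S₂)/2 := by
    calc ∑' k, |chebIntOp u (k+1)| * μ ^ (k+1) ≤ ∑' k, (μ * a k + a (k+2))/2 :=
          Summable.tsum_le_tsum hgb hg hb
      _ = (μ * a 0 + μ * S + S₂)/2 := hbsum
  -- assemble
  have hnormL : chebNorm μ (chebIntOp u) = |chebIntOp u 0| + 2 * ∑' k, |chebIntOp u (k+1)| * μ ^ (k+1) := rfl
  have hnormu : chebNorm μ u = a 0 + 2 * S := by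
    have : |u 0| = a 0 := by simp [ha_def]
    rw [chebNorm, this, hS_def]
  rw [hnormL, hnormu]
  have hprod : S ≤ μ * S := le_mul_of_one_le_left hS0 hμ
  have ha10 : 0 ≤ a 1 := ha0 1
  nlinarith [h0, htail]
end

section
/- Let μ ≥ 1, let K be a natural number, and let u : ℕ → ℝ satisfy ‖u‖ = |u₀| + 2∑_{k≥1} |u_k| μ^k < ∞ and u_k = 0 for all k ≤ K + 1. Define (𝓛_C u)_k = (u_{k−1} − u_{k+1})/(2k) for k ≥ 1. Then 2 ∑_{k ≥ K+1} |(𝓛_C u)_k| μ^k ≤ (μ^{−1}/(2(K+1)) + μ/(2(K+3))) · ‖u‖. (This is the tail bound ‖Π_{>K} 𝓛_C Π_{>K+1}‖ ≤ μ^{−1}/(2(K+1)) + μ/(2(K+3)).) -/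
/-- Tail bound `‖Π_{>K} 𝓛_C Π_{>K+1}‖ ≤ μ^{−1}/(2(K+1)) + μ/(2(K+3))` for the Chebyshev
integration operator: if `μ ≥ 1`, `u` has finite weighted norm
`‖u‖ = |u₀| + 2∑_{k≥1} |u_k| μ^k` and `u_k = 0` for all `k ≤ K+1`, then
`2 ∑_{k ≥ K+1} |(𝓛_C u)_k| μ^k ≤ (μ⁻¹/(2(K+1)) + μ/(2(K+3))) ‖u‖`, where
`(𝓛_C u)_k = (u_{k−1} − u_{k+1})/(2k)` for `k ≥ 1`. -/
theorem chebIntOp_tail_bound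
    (μ : ℝ) (hμ : 1 ≤ μ) (K : ℕ) (u : ℕ → ℝ)
    (hu : Summable fun k : ℕ => |u k| * μ ^ k)
    (hzero : ∀ k ≤ K + 1, u k = 0) :
    2 * ∑' j : ℕ, |(u (K + j) - u (K + j + 2)) / (2 * ((K : ℝ) + 1 + j))| * μ ^ (K + 1 + j) ≤
      (μ⁻¹ / (2 * ((K : ℝ) + 1)) + μ / (2 * ((K : ℝ) + 3))) *
        (|u 0| + 2 * ∑' k : ℕ, |u (k + 1)| * μ ^ (k + 1)) := by
  have hμ0 : (0:ℝ) < μ := lt_of_lt_of_le one_pos hμ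
  set f : ℕ → ℝ := fun k => |u k| * μ ^ k with hf
  have hfnn : ∀ k, 0 ≤ f k := fun k => by
    simp only [hf]; positivity
  set c1 : ℝ := μ⁻¹ / (2 * ((K : ℝ) + 1)) with hc1d
  set c2 : ℝ := μ / (2 * ((K : ℝ) + 3)) with hc2d
  have hc1 : 0 ≤ c1 := by rw [hc1d]; positivity
  have hc2 : 0 ≤ c2 := by rw [hc2d]; positivity
  -- summability of shifted sums
  have hsumm : ∀ m : ℕ, Summable fun j => f (m + j) := fun m =>
    ((summable_nat_add_iff (f := f) m).2 hu).congr (fun b => by rw [Nat.add_comm])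
  have h1 : Summable fun j => f (K + j) := hsumm K
  have h2 : Summable fun j => f (K + j + 2) :=
    (hsumm (K + 2)).congr (fun b => by congr 1; omega)
  have hS : Summable fun k => f (k + 1) := (summable_nat_add_iff (f := f) 1).2 hu
  -- pointwise bound
  have hpt : ∀ j : ℕ,
      |(u (K + j) - u (K + j + 2)) / (2 * ((K : ℝ) + 1 + j))| * μ ^ (K + 1 + j)
        ≤ c2 * f (K + j) + c1 * f (K + j + 2) := by
    intro j
    have hd : (0:ℝ) < 2 * ((K : ℝ) + 1 + j) := by positivity
    rw [abs_div, abs_of_pos hd]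
    have hA : |u (K + j)| / (2 * ((K : ℝ) + 1 + j)) * μ ^ (K + 1 + j) ≤ c2 * f (K + j) := by
      rcases lt_or_ge j 2 with hj | hj
      · have hz : u (K + j) = 0 := hzero _ (by omega)
        have h0 : 0 ≤ c2 * f (K + j) := mul_nonneg hc2 (hfnn _)
        simpa [hz] using h0
      · have hjj : (2:ℝ) ≤ (j:ℝ) := by exact_mod_cast hj
        have hexp : μ ^ (K + 1 + j) = μ ^ (K + j) * μ := by
          rw [← pow_succ]; congr 1; omega
        calc |u (K + j)| / (2 * ((K : ℝ) + 1 + j)) * μ ^ (K + 1 + j)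
            = μ / (2 * ((K : ℝ) + 1 + j)) * (|u (K + j)| * μ ^ (K + j)) := by
              rw [hexp]; ring
          _ ≤ c2 * (|u (K + j)| * μ ^ (K + j)) := by
              apply mul_le_mul_of_nonneg_right _ (by positivity)
              rw [hc2d]
              gcongr μ / ?_
              linarith
          _ = c2 * f (K + j) := by rw [hf]
    have hB : |u (K + j + 2)| / (2 * ((K : ℝ) + 1 + j)) * μ ^ (K + 1 + j)
        ≤ c1 * f (K + j + 2) := by
      have hexp : μ ^ (K + 1 + j) = μ ^ (K + j + 2) * μ⁻¹ := by
        have he : K + j + 2 = (K + 1 + j) + 1 := by omega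
        rw [he, pow_succ]
        field_simp
      calc |u (K + j + 2)| / (2 * ((K : ℝ) + 1 + j)) * μ ^ (K + 1 + j)
          = μ⁻¹ / (2 * ((K : ℝ) + 1 + j)) * (|u (K + j + 2)| * μ ^ (K + j + 2)) := by
            rw [hexp]; ring
        _ ≤ c1 * (|u (K + j + 2)| * μ ^ (K + j + 2)) := by
            apply mul_le_mul_of_nonneg_right _ (by positivity)
            rw [hc1d]
            gcongr μ⁻¹ / ?_
            have : (0:ℝ) ≤ (j:ℝ) := Nat.cast_nonneg j
            linarith
        _ = c1 * f (K + j + 2) := by rw [hf]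
    calc |u (K + j) - u (K + j + 2)| / (2 * ((K : ℝ) + 1 + j)) * μ ^ (K + 1 + j)
        ≤ (|u (K + j)| + |u (K + j + 2)|) / (2 * ((K : ℝ) + 1 + j)) * μ ^ (K + 1 + j) := by
          gcongr
          exact abs_sub _ _
      _ = |u (K + j)| / (2 * ((K : ℝ) + 1 + j)) * μ ^ (K + 1 + j)
          + |u (K + j + 2)| / (2 * ((K : ℝ) + 1 + j)) * μ ^ (K + 1 + j) := by ring
      _ ≤ c2 * f (K + j) + c1 * f (K + j + 2) := add_le_add hA hB
  have hbsum : Summable fun j => c2 * f (K + j) + c1 * f (K + j + 2) :=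
    (h1.mul_left c2).add (h2.mul_left c1)
  have ha_sum : Summable fun j : ℕ =>
      |(u (K + j) - u (K + j + 2)) / (2 * ((K : ℝ) + 1 + j))| * μ ^ (K + 1 + j) :=
    Summable.of_nonneg_of_le (fun j => by positivity) hpt hbsum
  -- step lemma for peeling off the first term
  have step : ∀ m : ℕ, Summable (fun j => f (m + j)) →
      ∑' j, f (m + j) = f m + ∑' j, f (m + 1 + j) := by
    intro m hm
    rw [Summable.tsum_eq_zero_add hm]
    simp only [Nat.add_zero]
    congr 1
    exact tsum_congr fun b => by congr 1; omega
  have hT1 : ∑' j, f (K + j) = ∑' j, f (K + j + 2) := by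
    rw [step K (hsumm K), step (K + 1) (hsumm (K + 1))]
    have hzK : f K = 0 := by simp [hf, hzero K (by omega)]
    have hzK1 : f (K + 1) = 0 := by simp [hf, hzero (K + 1) le_rfl]
    rw [hzK, hzK1, zero_add, zero_add]
    exact tsum_congr fun b => by congr 1; omega
  have hTS : ∑' j, f (K + j + 2) ≤ ∑' k, f (k + 1) :=
    Summable.tsum_le_tsum_of_inj (fun j => K + 1 + j) (add_right_injective (K + 1))
      (fun c _ => hfnn _)
      (fun j => by
        show f (K + j + 2) ≤ f (K + 1 + j + 1)
        exact le_of_eq (by congr 1; omega)) h2 hS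
  have hsum_le :
      (∑' j : ℕ, |(u (K + j) - u (K + j + 2)) / (2 * ((K : ℝ) + 1 + j))| * μ ^ (K + 1 + j))
        ≤ (c1 + c2) * ∑' k, f (k + 1) := by
    calc (∑' j : ℕ, |(u (K + j) - u (K + j + 2)) / (2 * ((K : ℝ) + 1 + j))| * μ ^ (K + 1 + j))
        ≤ ∑' j, (c2 * f (K + j) + c1 * f (K + j + 2)) := Summable.tsum_le_tsum hpt ha_sum hbsum
      _ = c2 * (∑' j, f (K + j)) + c1 * (∑' j, f (K + j + 2)) := by
          rw [Summable.tsum_add (h1.mul_left c2) (h2.mul_left c1), tsum_mul_left, tsum_mul_left]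
      _ = (c1 + c2) * ∑' j, f (K + j + 2) := by rw [hT1]; ring
      _ ≤ (c1 + c2) * ∑' k, f (k + 1) :=
          mul_le_mul_of_nonneg_left hTS (add_nonneg hc1 hc2)
  have hSeq : (∑' k : ℕ, |u (k + 1)| * μ ^ (k + 1)) = ∑' k : ℕ, f (k + 1) := by
    simp only [hf]
  rw [hSeq]
  have hu0 : 0 ≤ (c1 + c2) * |u 0| := mul_nonneg (add_nonneg hc1 hc2) (abs_nonneg _)
  nlinarith [hsum_le, hu0]
end

section
/- Let μ ≥ 1, let K be a natural number, and let u : ℕ → ℝ satisfy ‖u‖ = |u₀| + 2∑_{k≥1} |u_k| μ^k < ∞ and u_k = 0 for all k ≤ K + 1. Then |u₀ − u₁/2 + 2∑_{l≥2} ((−1)^{l+1}/(l² − 1)) u_l| = |2∑_{l≥K+2} ((−1)^{l+1}/(l² − 1)) u_l| ≤ (μ^{−(K+2)} / ((K+2)² − 1)) · ‖u‖. (This is the bound ‖Π_{≤0} 𝓛_C Π_{>K+1}‖ ≤ μ^{−(K+2)}/((K+2)² − 1) on the zeroth row of the Chebyshev integration operator.) -/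
/-- Bound `‖Π_{≤0} 𝓛_C Π_{>K+1}‖ ≤ μ^{−(K+2)}/((K+2)²−1)` on the zeroth row of the
Chebyshev integration operator: if `μ ≥ 1` and `u` has finite weighted norm and
`u_k = 0` for all `k ≤ K+1`, then the zeroth coefficient
`u₀ − u₁/2 + 2∑_{l≥2} ((−1)^{l+1}/(l²−1)) u_l` equals
`2∑_{l≥K+2} ((−1)^{l+1}/(l²−1)) u_l`, and its absolute value is at most
`(μ^{K+2})⁻¹/((K+2)²−1) · ‖u‖`. -/
theorem chebIntOp_zeroth_row_bound
    (μ : ℝ) (hμ : 1 ≤ μ) (K : ℕ) (u : ℕ → ℝ)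
    (hu : Summable fun k : ℕ => |u k| * μ ^ k)
    (hzero : ∀ k ≤ K + 1, u k = 0) :
    (u 0 - u 1 / 2 +
        2 * ∑' l : ℕ, ((-1 : ℝ) ^ (l + 2 + 1) / (((l + 2 : ℕ) : ℝ) ^ 2 - 1)) * u (l + 2) =
      2 * ∑' l : ℕ,
        ((-1 : ℝ) ^ (K + 2 + l + 1) / (((K + 2 + l : ℕ) : ℝ) ^ 2 - 1)) * u (K + 2 + l)) ∧
    |u 0 - u 1 / 2 +
        2 * ∑' l : ℕ, ((-1 : ℝ) ^ (l + 2 + 1) / (((l + 2 : ℕ) : ℝ) ^ 2 - 1)) * u (l + 2)| ≤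
      (μ ^ (K + 2))⁻¹ / ((((K : ℝ) + 2)) ^ 2 - 1) *
        (|u 0| + 2 * ∑' k : ℕ, |u (k + 1)| * μ ^ (k + 1)) := by
  have hμ0 : (0:ℝ) < μ := lt_of_lt_of_le one_pos hμ
  set f : ℕ → ℝ := fun n => ((-1 : ℝ) ^ (n + 1) / ((n : ℝ) ^ 2 - 1)) * u n with hf
  have hb : (0:ℝ) < ((K:ℝ)+2)^2 - 1 := by
    have : (0:ℝ) ≤ (K:ℝ) := Nat.cast_nonneg K
    nlinarith
  set C : ℝ := (μ ^ (K + 2))⁻¹ / (((K:ℝ)+2)^2 - 1) with hC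
  have hC0 : 0 ≤ C := by positivity
  have hden : ∀ n : ℕ, 2 ≤ n → (0:ℝ) < (n:ℝ)^2 - 1 := by
    intro n hn
    have : (2:ℝ) ≤ (n:ℝ) := by exact_mod_cast hn
    nlinarith
  have habs : ∀ n : ℕ, 2 ≤ n → |f n| = |u n| / ((n:ℝ)^2 - 1) := by
    intro n hn
    rw [hf]
    rw [abs_mul, abs_div, abs_pow, abs_neg, abs_one, one_pow, one_div, inv_mul_eq_div,
      abs_of_pos (hden n hn)]
  have hfle : ∀ n : ℕ, 2 ≤ n → |f n| ≤ |u n| * μ ^ n := by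
    intro n hn
    rw [habs n hn]
    have h3 := hden n hn
    have h1 : (1:ℝ) ≤ μ ^ n := one_le_pow₀ hμ
    have h4 : (1:ℝ) ≤ (n:ℝ)^2 - 1 := by
      have : (2:ℝ) ≤ (n:ℝ) := by exact_mod_cast hn
      nlinarith
    calc |u n| / ((n:ℝ)^2 - 1) ≤ |u n| / 1 := by
          apply div_le_div_of_nonneg_left (abs_nonneg _) one_pos h4
      _ = |u n| := div_one _
      _ ≤ |u n| * μ ^ n := le_mul_of_one_le_right (abs_nonneg _) h1
  -- summability
  have hsum2 : Summable fun l : ℕ => |u (l+2)| * μ ^ (l+2) :=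
    hu.comp_injective (fun a b h => by omega)
  have hsumf2 : Summable fun l : ℕ => f (l+2) :=
    Summable.of_abs (Summable.of_nonneg_of_le (fun l => abs_nonneg _)
      (fun l => hfle (l+2) (by omega)) hsum2)
  have hsumK : Summable fun l : ℕ => |u (K+2+l)| * μ ^ (K+2+l) :=
    hu.comp_injective (fun a b h => by omega)
  have hsumfKabs : Summable fun l : ℕ => |f (K+2+l)| :=
    Summable.of_nonneg_of_le (fun l => abs_nonneg _)
      (fun l => hfle (K+2+l) (by omega)) hsumK
  have hsumfK : Summable fun l : ℕ => f (K+2+l) := Summable.of_abs hsumfKabs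
  have hsumh : Summable fun k : ℕ => |u (k+1)| * μ ^ (k+1) :=
    hu.comp_injective (fun a b h => by omega)
  -- key per-term bound
  have hkey : ∀ l : ℕ, |f (K+2+l)| ≤ C * (|u (K+2+l)| * μ ^ (K+2+l)) := by
    intro l
    rw [habs (K+2+l) (by omega)]
    have hab : ((K:ℝ)+2)^2 - 1 ≤ ((K+2+l : ℕ):ℝ)^2 - 1 := by
      have h1 : ((K:ℝ)+2) ≤ ((K+2+l : ℕ):ℝ) := by push_cast; linarith [Nat.cast_nonneg (α := ℝ) l]
      have h2 : (0:ℝ) ≤ (K:ℝ)+2 := by positivity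
      nlinarith
    have hmp : μ ^ (K+2) ≤ μ ^ (K+2+l) := pow_le_pow_right₀ hμ (by omega)
    have hpos : (0:ℝ) < μ ^ (K+2) := by positivity
    calc |u (K+2+l)| / (((K+2+l : ℕ):ℝ)^2 - 1)
        ≤ |u (K+2+l)| / (((K:ℝ)+2)^2 - 1) :=
          div_le_div_of_nonneg_left (abs_nonneg _) hb hab
      _ ≤ ((μ ^ (K+2))⁻¹ * μ ^ (K+2+l)) * (|u (K+2+l)| / (((K:ℝ)+2)^2 - 1)) := by
          apply le_mul_of_one_le_left (by positivity)
          rw [← div_eq_inv_mul]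
          exact (one_le_div hpos).mpr hmp
      _ = C * (|u (K+2+l)| * μ ^ (K+2+l)) := by rw [hC]; ring
  -- the two tsums as f
  have e1 : (∑' l : ℕ, ((-1 : ℝ) ^ (l + 2 + 1) / (((l + 2 : ℕ) : ℝ) ^ 2 - 1)) * u (l + 2))
      = ∑' l : ℕ, f (l+2) := rfl
  have e2 : (∑' l : ℕ, ((-1 : ℝ) ^ (K + 2 + l + 1) / (((K + 2 + l : ℕ) : ℝ) ^ 2 - 1)) * u (K + 2 + l))
      = ∑' l : ℕ, f (K+2+l) := rfl
  have hu0 : u 0 = 0 := hzero 0 (by omega)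
  have hu1 : u 1 = 0 := hzero 1 (by omega)
  -- shift equality
  have hshift : (∑' l : ℕ, f (l+2)) = ∑' l : ℕ, f (K+2+l) := by
    have h := Summable.sum_add_tsum_nat_add (f := fun l : ℕ => f (l+2)) K hsumf2
    have hz : (∑ i ∈ Finset.range K, f (i+2)) = 0 := by
      apply Finset.sum_eq_zero
      intro i hi
      have : u (i+2) = 0 := hzero (i+2) (by
        have := Finset.mem_range.mp hi; omega)
      simp [hf, this]
    rw [hz, zero_add] at h
    rw [← h]
    exact tsum_congr fun l => by show f (l + K + 2) = f (K + 2 + l); rw [show l + K + 2 = K + 2 + l from by omega]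
  have heq : u 0 - u 1 / 2 +
      2 * ∑' l : ℕ, ((-1 : ℝ) ^ (l + 2 + 1) / (((l + 2 : ℕ) : ℝ) ^ 2 - 1)) * u (l + 2) =
      2 * ∑' l : ℕ,
        ((-1 : ℝ) ^ (K + 2 + l + 1) / (((K + 2 + l : ℕ) : ℝ) ^ 2 - 1)) * u (K + 2 + l) := by
    rw [e1, e2, hu0, hu1, hshift]; ring
  refine ⟨heq, ?_⟩
  rw [heq, e2, hu0, abs_zero, abs_mul, abs_two]
  -- |∑' f(K+2+l)| ≤ ∑' |f| ≤ C * tail ≤ C * full sum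
  have h1 : |∑' l : ℕ, f (K+2+l)| ≤ ∑' l : ℕ, |f (K+2+l)| := by
    simpa [Real.norm_eq_abs] using norm_tsum_le_tsum_norm (f := fun l : ℕ => f (K+2+l))
      (by simpa [Real.norm_eq_abs] using hsumfKabs)
  have h2 : (∑' l : ℕ, |f (K+2+l)|) ≤ C * ∑' l : ℕ, |u (K+2+l)| * μ ^ (K+2+l) := by
    rw [← tsum_mul_left]
    exact Summable.tsum_le_tsum hkey hsumfKabs (hsumK.mul_left C)
  have h3 : (∑' l : ℕ, |u (K+2+l)| * μ ^ (K+2+l)) ≤ ∑' k : ℕ, |u (k+1)| * μ ^ (k+1) := by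
    have h := Summable.sum_add_tsum_nat_add (f := fun k : ℕ => |u (k+1)| * μ ^ (k+1)) (K+1) hsumh
    have hnn : (0:ℝ) ≤ ∑ i ∈ Finset.range (K+1), |u (i+1)| * μ ^ (i+1) :=
      Finset.sum_nonneg fun i _ => by positivity
    have heq2 : (∑' l : ℕ, |u (K+2+l)| * μ ^ (K+2+l))
        = ∑' l : ℕ, |u (l+(K+1)+1)| * μ ^ (l+(K+1)+1) :=
      tsum_congr fun l => by rw [show K + 2 + l = l + (K+1) + 1 from by omega]
    rw [heq2]
    linarith [h]
  have hnnsum : (0:ℝ) ≤ ∑' k : ℕ, |u (k+1)| * μ ^ (k+1) :=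
    tsum_nonneg fun k => by positivity
  calc (2:ℝ) * |∑' l : ℕ, f (K+2+l)|
      ≤ 2 * (C * ∑' k : ℕ, |u (k+1)| * μ ^ (k+1)) := by
        have := le_trans h1 (le_trans h2 (mul_le_mul_of_nonneg_left h3 hC0))
        linarith
    _ = C * (0 + 2 * ∑' k : ℕ, |u (k+1)| * μ ^ (k+1)) := by ring
end
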